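/- For any three points x, x1, x2 in a metric space, the determinant of B2(x, x1, x2) equals zero if and only if at least one of the following three betweenness relations holds: d(x1,x2) = d(x1,x) + d(x,x2), or d(x,x2) = d(x,x1) + d(x1,x2), or d(x,x1) = d(x,x2) + d(x2,x1). -/
import Mathlib


/-- The `2 × 2` matrix `B2(x, x1, x2)` with `(k,ℓ)`-entry
`(1/2)(d(x,x_k)² + d(x,x_ℓ)² - d(x_k,x_ℓ)²)`. -/
noncomputable def B2 {X : Type*} [MetricSpace X] (x x1 x2 : X) :
    Matrix (Fin 2) (Fin 2) ℝ :=
  Matrix.of fun k ℓ =>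
    (1 / 2) * (dist x (![x1, x2] k) ^ 2 + dist x (![x1, x2] ℓ) ^ 2
      - dist (![x1, x2] k) (![x1, x2] ℓ) ^ 2)

theorem detB2_eq_zero_iff_betweenness {X : Type*} [MetricSpace X] (x x1 x2 : X) :
    (B2 x x1 x2).det = 0 ↔
      (dist x1 x2 = dist x1 x + dist x x2 ∨
       dist x x2 = dist x x1 + dist x1 x2 ∨
       dist x x1 = dist x x2 + dist x2 x1) := by
  have ta : dist x1 x2 ≤ dist x x1 + dist x x2 := by
    rw [dist_comm x x1]; exact dist_triangle x1 x x2
  have tb : dist x x2 ≤ dist x x1 + dist x1 x2 := dist_triangle x x1 x2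
  have tc : dist x x1 ≤ dist x x2 + dist x1 x2 := by
    rw [dist_comm x1 x2]; exact dist_triangle x x2 x1
  have ha : (0:ℝ) ≤ dist x x1 := dist_nonneg
  have hb : (0:ℝ) ≤ dist x x2 := dist_nonneg
  have hc : (0:ℝ) ≤ dist x1 x2 := dist_nonneg
  rw [dist_comm x1 x, dist_comm x2 x1]
  set a := dist x x1 with hA
  set b := dist x x2 with hB
  set c := dist x1 x2 with hC
  simp only [B2, Matrix.det_fin_two, Matrix.of_apply, Matrix.cons_val_zero,
    Matrix.cons_val_one, Matrix.head_cons, dist_self]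
  rw [← hA, ← hB, ← hC, dist_comm x2 x1, ← hC]
  constructor
  · intro h
    have key : (a + b - c) * ((c + a - b) * ((b + c - a) * (a + b + c))) = 0 := by
      nlinarith [h]
    rcases mul_eq_zero.1 key with h1 | h1
    · exact Or.inl (by linarith)
    rcases mul_eq_zero.1 h1 with h2 | h2
    · exact Or.inr (Or.inl (by linarith))
    rcases mul_eq_zero.1 h2 with h3 | h3
    · exact Or.inr (Or.inr (by linarith))
    · exact Or.inl (by linarith)
  · rintro (h | h | h) <;> rw [h] <;> ring
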